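/- Let d, n ≥ 1 be integers with d > n³/2. Then p_d(n) < C(d+n-2, d-1) / (1 - n³/(2d)), where p_d(n) is the number of lower sets of cardinality n in ℤ_{≥0}^d and C(·,·) is the binomial coefficient. -/

import Mathlib

/-- `Q` is a lower (downward closed) set in `ℤ_{≥0}^d`. -/
def IsLowerFinset {d : ℕ} (Q : Finset (Fin d → ℕ)) : Prop :=
  ∀ x ∈ Q, ∀ y : Fin d → ℕ, (∀ i, y i ≤ x i) → y ∈ Q

/-- The number of lower sets of cardinality `n` in `ℤ_{≥0}^d`. -/
noncomputable def numLowerSets (d n : ℕ) : ℕ :=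
  Set.ncard {Q : Finset (Fin d → ℕ) | IsLowerFinset Q ∧ Q.card = n}

namespace LowerAux

open Finset

attribute [local instance] Classical.propDecidable

variable {d : ℕ}

/-- standard basis vector -/
def e (i : Fin d) : Fin d → ℕ := fun t => if t = i then 1 else 0

lemma e_apply_self (i : Fin d) : e i i = 1 := if_pos rfl

lemma e_apply_ne {i t : Fin d} (h : t ≠ i) : e i t = 0 := if_neg h

lemma e_ne_zero (i : Fin d) : e i ≠ 0 := by
  intro h
  have := congrFun h i
  simp [e_apply_self] at this

lemma e_inj {i j : Fin d} (h : e i = e j) : i = j := by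
  by_contra hij
  have := congrFun h i
  rw [e_apply_self, e_apply_ne hij] at this
  exact absurd this one_ne_zero

lemma zero_mem {Q : Finset (Fin d → ℕ)} (hQ : IsLowerFinset Q) (h : Q.Nonempty) :
    (0 : Fin d → ℕ) ∈ Q := by
  obtain ⟨x, hx⟩ := h
  exact hQ x hx 0 fun i => Nat.zero_le _

lemma e_mem {Q : Finset (Fin d → ℕ)} (hQ : IsLowerFinset Q) {x : Fin d → ℕ} (hx : x ∈ Q)
    {i : Fin d} (hi : 0 < x i) : e i ∈ Q := by
  refine hQ x hx (e i) fun t => ?_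
  by_cases ht : t = i
  · subst ht; rw [e_apply_self]; omega
  · rw [e_apply_ne ht]; omega

lemma coord_lt {n : ℕ} {Q : Finset (Fin d → ℕ)} (hQ : IsLowerFinset Q) (hcard : Q.card = n)
    {x : Fin d → ℕ} (hx : x ∈ Q) (i : Fin d) : x i < n := by
  have hinj : Set.InjOn (fun m : ℕ => (fun t => if t = i then m else 0 : Fin d → ℕ))
      ↑(Finset.range (x i + 1)) := by
    intro a _ b _ hab
    have := congrFun hab i
    simpa using this
  have hmaps : ∀ m ∈ Finset.range (x i + 1),
      (fun t => if t = i then m else 0 : Fin d → ℕ) ∈ Q := by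
    intro m hm
    refine hQ x hx _ fun t => ?_
    by_cases ht : t = i
    · subst ht
      rw [if_pos rfl]
      have := Finset.mem_range.1 hm
      omega
    · simp [ht]
  have := Finset.card_le_card_of_injOn _ hmaps hinj
  rw [Finset.card_range, hcard] at this
  omega

/-- all lower sets of cardinality `n` -/
noncomputable def LS (d n : ℕ) : Finset (Finset (Fin d → ℕ)) :=
  (Fintype.piFinset fun _ : Fin d => Finset.range n).powerset.filter
    fun Q => IsLowerFinset Q ∧ Q.card = n

lemma mem_LS {n : ℕ} {Q : Finset (Fin d → ℕ)} :
    Q ∈ LS d n ↔ IsLowerFinset Q ∧ Q.card = n := by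
  constructor
  · intro h; exact (Finset.mem_filter.1 h).2
  · intro h
    refine Finset.mem_filter.2 ⟨Finset.mem_powerset.2 fun x hx => ?_, h⟩
    exact Fintype.mem_piFinset.2 fun i => Finset.mem_range.2 (coord_lt h.1 h.2 hx i)

lemma numLowerSets_eq (d n : ℕ) : numLowerSets d n = (LS d n).card := by
  have : {Q : Finset (Fin d → ℕ) | IsLowerFinset Q ∧ Q.card = n} = ↑(LS d n) := by
    ext Q; simp [mem_LS]
  rw [numLowerSets, this, Set.ncard_coe_finset]

/-- active coordinates -/
noncomputable def actv (Q : Finset (Fin d → ℕ)) : Finset (Fin d) :=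
  Finset.univ.filter fun i => ∃ x ∈ Q, 0 < x i

lemma mem_actv {Q : Finset (Fin d → ℕ)} {i : Fin d} :
    i ∈ actv Q ↔ ∃ x ∈ Q, 0 < x i := by
  simp [actv]

lemma e_mem_of_actv {Q : Finset (Fin d → ℕ)} (hQ : IsLowerFinset Q) {i : Fin d}
    (hi : i ∈ actv Q) : e i ∈ Q := by
  obtain ⟨x, hx, hxi⟩ := mem_actv.1 hi
  exact e_mem hQ hx hxi

lemma actv_of_e_mem {Q : Finset (Fin d → ℕ)} {i : Fin d} (h : e i ∈ Q) : i ∈ actv Q :=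
  mem_actv.2 ⟨e i, h, by rw [e_apply_self]; omega⟩

lemma actv_card_lt {n : ℕ} (hn : 1 ≤ n) {Q : Finset (Fin d → ℕ)} (hQ : Q ∈ LS d n) :
    (actv Q).card < n := by
  obtain ⟨hQl, hQc⟩ := mem_LS.1 hQ
  have hne : Q.Nonempty := Finset.card_pos.1 (by omega)
  have h0 : (0 : Fin d → ℕ) ∈ Q := zero_mem hQl hne
  have hmaps : ∀ i ∈ actv Q, e i ∈ Q.erase 0 := fun i hi =>
    Finset.mem_erase.2 ⟨e_ne_zero i, e_mem_of_actv hQl hi⟩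
  have hinj : Set.InjOn e (↑(actv Q) : Set (Fin d)) := fun a _ b _ hab => e_inj hab

  have := Finset.card_le_card_of_injOn _ hmaps hinj
  rw [Finset.card_erase_of_mem h0, hQc] at this
  omega

lemma sum_lt_of_le_ne {x y : Fin d → ℕ} (hle : ∀ t, x t ≤ y t) (hne : x ≠ y) :
    ∑ t, x t < ∑ t, y t := by
  obtain ⟨t, ht⟩ := Function.ne_iff.1 hne
  exact Finset.sum_lt_sum (fun i _ => hle i) ⟨t, Finset.mem_univ t,
    lt_of_le_of_ne (hle t) ht⟩

/-- lower sets of cardinality `n` with exactly `k` active coordinates -/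
noncomputable def A (d n k : ℕ) : Finset (Finset (Fin d → ℕ)) :=
  (LS d n).filter fun Q => (actv Q).card = k

lemma card_LS_eq_sum {n : ℕ} (hn : 1 ≤ n) :
    (LS d n).card = ∑ k ∈ Finset.range n, (A d n k).card := by
  exact Finset.card_eq_sum_card_fiberwise fun Q hQ =>
    Finset.mem_range.2 (actv_card_lt hn hQ)

lemma Q_eq_of_actv {n : ℕ} {Q : Finset (Fin d → ℕ)} (hQ : Q ∈ A d n (n - 1)) (hn : 1 ≤ n) :
    Q = insert 0 ((actv Q).image e) := by
  obtain ⟨hQLS, hac⟩ := Finset.mem_filter.1 hQ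
  obtain ⟨hQl, hQc⟩ := mem_LS.1 hQLS
  have hne : Q.Nonempty := Finset.card_pos.1 (by omega)
  have h0 : (0 : Fin d → ℕ) ∈ Q := zero_mem hQl hne
  have hsub : insert 0 ((actv Q).image e) ⊆ Q := by
    intro y hy
    rcases Finset.mem_insert.1 hy with rfl | hy
    · exact h0
    · obtain ⟨i, hi, rfl⟩ := Finset.mem_image.1 hy
      exact e_mem_of_actv hQl hi
  refine (Finset.eq_of_subset_of_card_le hsub ?_).symm
  have h0im : (0 : Fin d → ℕ) ∉ (actv Q).image e := by
    intro hc
    obtain ⟨i, _, hi⟩ := Finset.mem_image.1 hc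
    exact e_ne_zero i hi
  rw [Finset.card_insert_of_notMem h0im,
    Finset.card_image_of_injOn (fun a _ b _ hab => e_inj hab), hac, hQc]
  omega

lemma A_top_le {n : ℕ} (hn : 1 ≤ n) : (A d n (n - 1)).card ≤ d.choose (n - 1) := by
  have hmaps : ∀ Q ∈ A d n (n - 1), actv Q ∈ Finset.univ.powersetCard (n - 1) := by
    intro Q hQ
    exact Finset.mem_powersetCard.2 ⟨Finset.subset_univ _, (Finset.mem_filter.1 hQ).2⟩
  have hinj : Set.InjOn actv (↑(A d n (n - 1)) : Set (Finset (Fin d → ℕ))) := by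
    intro Q1 h1 Q2 h2 heq
    rw [Q_eq_of_actv (d := d) (n := n) (Q := Q1) (by exact_mod_cast h1) hn,
      Q_eq_of_actv (d := d) (n := n) (Q := Q2) (by exact_mod_cast h2) hn, heq]
  have := Finset.card_le_card_of_injOn _ hmaps hinj
  rwa [Finset.card_powersetCard, Finset.card_univ, Fintype.card_fin] at this

lemma exists_big_max {n k : ℕ} {Q : Finset (Fin d → ℕ)} (hQl : IsLowerFinset Q)
    (hQc : Q.card = n) (hac : (actv Q).card = k) (hk : k + 2 ≤ n) :
    ∃ x ∈ Q, 2 ≤ ∑ t, x t ∧ ∀ y ∈ Q, ∑ t, y t ≤ ∑ t, x t := by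
  have hne : Q.Nonempty := Finset.card_pos.1 (by omega)
  obtain ⟨x, hxQ, hmax⟩ := Q.exists_max_image (fun y => ∑ t, y t) hne
  refine ⟨x, hxQ, ?_, hmax⟩
  by_contra hx2
  push_neg at hx2
  have hall : ∀ y ∈ Q, ∑ t, y t ≤ 1 := fun y hy => by
    have := hmax y hy; omega
  have hsub : Q ⊆ insert 0 ((actv Q).image e) := by
    intro y hy
    have hy1 := hall y hy
    rcases Nat.eq_zero_or_pos (∑ t, y t) with h0 | hpos
    · have : y = 0 := by
        funext t
        exact (Finset.sum_eq_zero_iff.1 h0) t (Finset.mem_univ t)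
      rw [this]; exact Finset.mem_insert_self _ _
    · obtain ⟨i, _, hi⟩ := Finset.exists_lt_of_sum_lt (f := fun _ : Fin d => 0)
        (by simpa using hpos)
      have hsum : y i + ∑ t ∈ Finset.univ.erase i, y t = ∑ t, y t := by
        rw [Finset.add_sum_erase _ _ (Finset.mem_univ i)]
      have hyi : y i = 1 := by omega
      have hrest : ∑ t ∈ Finset.univ.erase i, y t = 0 := by omega
      have : y = e i := by
        funext t
        by_cases ht : t = i
        · subst ht; rw [e_apply_self, hyi]
        · rw [e_apply_ne ht]
          exact (Finset.sum_eq_zero_iff.1 hrest) t (Finset.mem_erase.2 ⟨ht, Finset.mem_univ t⟩)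
      rw [this]
      exact Finset.mem_insert_of_mem (Finset.mem_image_of_mem e (mem_actv.2 ⟨y, hy, by omega⟩))
  have := Finset.card_le_card hsub
  have h1 := Finset.card_insert_le (0 : Fin d → ℕ) ((actv Q).image e)
  have h2 := Finset.card_image_le (f := e) (s := actv Q)
  omega

section Construct

variable {n : ℕ} {Q : Finset (Fin d → ℕ)} {x : Fin d → ℕ} {c : Fin d}

lemma e_not_mem {Q : Finset (Fin d → ℕ)} {c : Fin d} (hc : c ∉ actv Q) : e c ∉ Q :=
  fun h => hc (actv_of_e_mem h)

lemma construct_card (hQc : Q.card = n) (hn : 1 ≤ n) (hx : x ∈ Q) (hc : e c ∉ Q) :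
    (insert (e c) (Q.erase x)).card = n := by
  rw [Finset.card_insert_of_notMem (fun hh => hc (Finset.mem_erase.1 hh).2),
    Finset.card_erase_of_mem hx, hQc]
  omega

lemma x_ne_zero (hx2 : 2 ≤ ∑ t, x t) : x ≠ 0 := by
  intro h
  rw [h] at hx2
  simp at hx2

lemma construct_lower (hQl : IsLowerFinset Q) (hQne : Q.Nonempty) (hx : x ∈ Q)
    (hx2 : 2 ≤ ∑ t, x t) (hmax : ∀ y ∈ Q, ∑ t, y t ≤ ∑ t, x t) (hc : e c ∉ Q) :
    IsLowerFinset (insert (e c) (Q.erase x)) := by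
  intro u hu y hy
  rcases Finset.mem_insert.1 hu with rfl | hu
  · by_cases hyc : y c = 0
    · have hy0 : y = 0 := by
        funext t
        by_cases ht : t = c
        · subst ht; exact hyc
        · have := hy t
          rw [e_apply_ne ht] at this
          simp only [Pi.zero_apply]
          omega
      rw [hy0]
      exact Finset.mem_insert_of_mem (Finset.mem_erase.2
        ⟨(x_ne_zero hx2 ∘ Eq.symm), zero_mem hQl hQne⟩)
    · have hyec : y = e c := by
        funext t
        by_cases ht : t = c
        · subst ht
          have := hy t
          rw [e_apply_self] at this ⊢
          omega
        · have := hy t; rw [e_apply_ne ht] at this ⊢; omega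
      rw [hyec]; exact Finset.mem_insert_self _ _
  · obtain ⟨hux, huQ⟩ := Finset.mem_erase.1 hu
    have hyQ : y ∈ Q := hQl u huQ y hy
    have hyx : y ≠ x := by
      rintro rfl
      have hlt : ∑ t, y t < ∑ t, u t := sum_lt_of_le_ne hy (fun hh => hux (hh ▸ rfl))
      have := hmax u huQ
      omega
    exact Finset.mem_insert_of_mem (Finset.mem_erase.2 ⟨hyx, hyQ⟩)

lemma construct_actv (hQl : IsLowerFinset Q) (hx : x ∈ Q) (hx2 : 2 ≤ ∑ t, x t)
    (hc : e c ∉ Q) :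
    actv (insert (e c) (Q.erase x)) = insert c (actv Q) := by
  ext t
  constructor
  · intro ht
    obtain ⟨z, hz, hzt⟩ := mem_actv.1 ht
    rcases Finset.mem_insert.1 hz with rfl | hz
    · by_cases htc : t = c
      · exact htc ▸ Finset.mem_insert_self _ _
      · rw [e_apply_ne htc] at hzt; omega
    · exact Finset.mem_insert_of_mem (mem_actv.2 ⟨z, (Finset.mem_erase.1 hz).2, hzt⟩)
  · intro ht
    rcases Finset.mem_insert.1 ht with rfl | ht
    · exact mem_actv.2 ⟨e t, Finset.mem_insert_self _ _, by rw [e_apply_self]; omega⟩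
    · obtain ⟨z, hzQ, hzt⟩ := mem_actv.1 ht
      by_cases hzx : z = x
      · subst hzx
        -- need a witness in Q.erase z with positive t coordinate
        by_cases h2 : 2 ≤ z t
        · refine mem_actv.2 ⟨z - e t, Finset.mem_insert_of_mem (Finset.mem_erase.2
            ⟨?_, hQl z hzQ _ fun s => by simp [Pi.sub_apply]⟩), ?_⟩
          · intro hh
            have := congrFun hh t
            rw [Pi.sub_apply, e_apply_self] at this
            omega
          · rw [Pi.sub_apply, e_apply_self]; omega
        · have hzt1 : z t = 1 := by omega
          have : ∃ s, s ≠ t ∧ 0 < z s := by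
            by_contra hcon
            push_neg at hcon
            have hsum : ∑ u, z u = z t + ∑ u ∈ Finset.univ.erase t, z u := by
              rw [Finset.add_sum_erase _ _ (Finset.mem_univ t)]
            have : ∑ u ∈ Finset.univ.erase t, z u = 0 :=
              Finset.sum_eq_zero fun u hu => by
                have := hcon u (Finset.mem_erase.1 hu).1
                omega
            omega
          obtain ⟨s, hst, hs⟩ := this
          refine mem_actv.2 ⟨z - e s, Finset.mem_insert_of_mem (Finset.mem_erase.2
            ⟨?_, hQl z hzQ _ fun u => by simp [Pi.sub_apply]⟩), ?_⟩
          · intro hh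
            have := congrFun hh s
            rw [Pi.sub_apply, e_apply_self] at this
            omega
          · rw [Pi.sub_apply, e_apply_ne (Ne.symm hst)]
            omega
      · exact mem_actv.2 ⟨z, Finset.mem_insert_of_mem (Finset.mem_erase.2 ⟨hzx, hzQ⟩), hzt⟩

end Construct

section Pair

/-- the doubleton code of an element with coordinate sum at least 2 -/
noncomputable def pairOf (x : Fin d → ℕ) : (Fin d → ℕ) × (Fin d → ℕ) :=
  if h : (Finset.univ.filter fun t => 0 < x t).Nonempty then
    if (Finset.univ.filter fun t => 0 < x t).min' h
        = (Finset.univ.filter fun t => 0 < x t).max' h then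
      (x - e ((Finset.univ.filter fun t => 0 < x t).min' h),
        x - (e ((Finset.univ.filter fun t => 0 < x t).min' h)
          + e ((Finset.univ.filter fun t => 0 < x t).min' h)))
    else
      (x - e ((Finset.univ.filter fun t => 0 < x t).min' h),
        x - e ((Finset.univ.filter fun t => 0 < x t).max' h))
  else (0, 0)

/-- recover an element from its doubleton code -/
noncomputable def recovF (s : Finset (Fin d → ℕ)) : Fin d → ℕ :=
  if s.sup id ∈ s then s.sup id + (s.sup id - (s.sum id - s.sup id)) else s.sup id

lemma sup_pair (a b : Fin d → ℕ) : ({a, b} : Finset (Fin d → ℕ)).sup id = a ⊔ b := by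
  simp

lemma recovF_pair_le {a b : Fin d → ℕ} (hba : b ≤ a) (hab : a ≠ b) :
    recovF {a, b} = a + (a - b) := by
  have hsup : ({a, b} : Finset (Fin d → ℕ)).sup id = a := by
    rw [sup_pair]; exact sup_eq_left.2 hba
  have hsum : ({a, b} : Finset (Fin d → ℕ)).sum id = a + b := Finset.sum_pair hab
  have hcancel : a + b - a = b := by
    funext t
    simp only [Pi.add_apply, Pi.sub_apply]
    omega
  rw [recovF, hsup, hsum, if_pos (Finset.mem_insert_self a {b}), hcancel]

lemma recovF_pair_incomp {a b : Fin d → ℕ} (h1 : ¬a ≤ b) (h2 : ¬b ≤ a) :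
    recovF {a, b} = a ⊔ b := by
  have hsup : ({a, b} : Finset (Fin d → ℕ)).sup id = a ⊔ b := sup_pair a b
  rw [recovF, hsup, if_neg]
  intro hmem
  rcases Finset.mem_insert.1 hmem with hh | hh
  · exact h2 (sup_eq_left.1 hh)
  · exact h1 (sup_eq_right.1 (Finset.mem_singleton.1 hh))

lemma pairOf_spec {x : Fin d → ℕ} (hx2 : 2 ≤ ∑ t, x t) :
    (pairOf x).1 ≤ x ∧ (pairOf x).2 ≤ x ∧ (pairOf x).1 ≠ x ∧ (pairOf x).2 ≠ x ∧
      (pairOf x).1 ≠ (pairOf x).2 ∧ recovF {(pairOf x).1, (pairOf x).2} = x := by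
  have hs : (Finset.univ.filter fun t => 0 < x t).Nonempty := by
    by_contra hcon
    rw [Finset.not_nonempty_iff_eq_empty, Finset.filter_eq_empty_iff] at hcon
    have hz : ∑ t, x t = 0 := Finset.sum_eq_zero fun t ht => by
      have := hcon ht; omega
    omega
  set i := (Finset.univ.filter fun t => 0 < x t).min' hs with hidef
  set j := (Finset.univ.filter fun t => 0 < x t).max' hs with hjdef
  have hi : 0 < x i := (Finset.mem_filter.1 (Finset.min'_mem _ hs)).2
  have hj : 0 < x j := (Finset.mem_filter.1 (Finset.max'_mem _ hs)).2
  rw [pairOf, dif_pos hs]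
  rw [← hidef, ← hjdef]
  by_cases hij : i = j
  · -- support is the singleton {i}
    rw [if_pos hij]
    dsimp only
    have hsupp : ∀ t, t ≠ i → x t = 0 := by
      intro t ht
      by_contra h0
      have htmem : t ∈ Finset.univ.filter fun u => 0 < x u :=
        Finset.mem_filter.2 ⟨Finset.mem_univ t, by omega⟩
      have h1 := Finset.min'_le _ t htmem
      have h2 := Finset.le_max' _ t htmem
      rw [← hidef] at h1
      rw [← hjdef, ← hij] at h2
      exact ht (le_antisymm h2 h1)
    have hxi : 2 ≤ x i := by
      have hsing : ∑ t, x t = x i := Finset.sum_eq_single i (fun b _ hb => hsupp b hb)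
        (fun hcon => absurd (Finset.mem_univ i) hcon)
      omega
    have hba : x - (e i + e i) ≤ x - e i := by
      refine Pi.le_def.2 fun t => ?_
      rw [Pi.sub_apply, Pi.sub_apply, Pi.add_apply]
      by_cases ht : t = i
      · subst ht; rw [e_apply_self]; omega
      · rw [e_apply_ne ht]
    have hne12 : x - e i ≠ x - (e i + e i) := by
      intro hc
      have := congrFun hc i
      rw [Pi.sub_apply, Pi.sub_apply, Pi.add_apply, e_apply_self] at this
      omega
    refine ⟨Pi.le_def.2 fun t => Nat.sub_le _ _, Pi.le_def.2 fun t => Nat.sub_le _ _,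
      ?_, ?_, hne12, ?_⟩
    · intro hc
      have := congrFun hc i
      rw [Pi.sub_apply, e_apply_self] at this
      omega
    · intro hc
      have := congrFun hc i
      rw [Pi.sub_apply, Pi.add_apply, e_apply_self] at this
      omega
    · rw [recovF_pair_le hba hne12]
      funext t
      rw [Pi.add_apply, Pi.sub_apply, Pi.sub_apply, Pi.sub_apply, Pi.sub_apply, Pi.add_apply]
      by_cases ht : t = i
      · subst ht; rw [e_apply_self]; omega
      · rw [e_apply_ne ht]; omega
  · rw [if_neg hij]
    dsimp only
    have hji0 : e j i = 0 := e_apply_ne (fun hh => hij hh)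
    have hij0 : e i j = 0 := e_apply_ne (fun hh => hij hh.symm)
    have hnle2 : ¬x - e j ≤ x - e i := by
      intro hc
      have := Pi.le_def.1 hc i
      rw [Pi.sub_apply, Pi.sub_apply, e_apply_self, hji0] at this
      omega
    have hnle1 : ¬x - e i ≤ x - e j := by
      intro hc
      have := Pi.le_def.1 hc j
      rw [Pi.sub_apply, Pi.sub_apply, e_apply_self, hij0] at this
      omega
    have hne12 : x - e i ≠ x - e j := fun hc => hnle1 (hc ▸ le_refl _)
    refine ⟨Pi.le_def.2 fun t => Nat.sub_le _ _, Pi.le_def.2 fun t => Nat.sub_le _ _,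
      ?_, ?_, hne12, ?_⟩
    · intro hc
      have := congrFun hc i
      rw [Pi.sub_apply, e_apply_self] at this
      omega
    · intro hc
      have := congrFun hc j
      rw [Pi.sub_apply, e_apply_self] at this
      omega
    · rw [recovF_pair_incomp hnle1 hnle2]
      funext t
      rw [Pi.sup_apply, Pi.sub_apply, Pi.sub_apply]
      by_cases hti : t = i
      · subst hti
        rw [e_apply_self, e_apply_ne (fun hh => hij hh), Nat.sub_zero,
          Nat.max_eq_right (Nat.sub_le _ _)]
      · by_cases htj : t = j
        · subst htj
          rw [e_apply_ne hti, e_apply_self, Nat.sub_zero,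
            Nat.max_eq_left (Nat.sub_le _ _)]
        · rw [e_apply_ne hti, e_apply_ne htj]
          simp

end Pair

lemma code_mem {Q Q' : Finset (Fin d → ℕ)} {c : Fin d} {x : Fin d → ℕ}
    (hQl : IsLowerFinset Q) (hxQ : x ∈ Q) (hx2 : 2 ≤ ∑ t, x t)
    (hQ'eq : Q' = insert (e c) (Q.erase x)) :
    (c, ({(pairOf x).1, (pairOf x).2} : Finset (Fin d → ℕ)))
      ∈ (actv Q') ×ˢ (Q'.powersetCard 2) := by
  obtain ⟨hle1, hle2, hne1, hne2, hne12, _⟩ := pairOf_spec hx2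
  have hmem1 : (pairOf x).1 ∈ Q' := by
    rw [hQ'eq]
    exact Finset.mem_insert_of_mem (Finset.mem_erase.2
      ⟨hne1, hQl _ hxQ _ (Pi.le_def.1 hle1)⟩)
  have hmem2 : (pairOf x).2 ∈ Q' := by
    rw [hQ'eq]
    exact Finset.mem_insert_of_mem (Finset.mem_erase.2
      ⟨hne2, hQl _ hxQ _ (Pi.le_def.1 hle2)⟩)
  refine Finset.mem_product.2 ⟨?_, ?_⟩
  · exact mem_actv.2 ⟨e c, by rw [hQ'eq]; exact Finset.mem_insert_self _ _,
      by rw [e_apply_self]; omega⟩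
  · refine Finset.mem_powersetCard.2 ⟨?_, Finset.card_pair hne12⟩
    intro z hz
    rcases Finset.mem_insert.1 hz with rfl | hz
    · exact hmem1
    · rw [Finset.mem_singleton.1 hz]; exact hmem2

lemma reconstruct {Q Q' : Finset (Fin d → ℕ)} {c : Fin d} {x : Fin d → ℕ}
    (hxQ : x ∈ Q) (hec : e c ∉ Q) (hQ'eq : Q' = insert (e c) (Q.erase x)) :
    Q = insert x (Q'.erase (e c)) := by
  rw [hQ'eq, Finset.erase_insert (fun hh => hec (Finset.mem_erase.1 hh).2),
    Finset.insert_erase hxQ]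

lemma step {n k : ℕ} (hd : 1 ≤ d) (hk : k + 2 ≤ n) :
    (A d n k).card * (d - k) ≤ (A d n (k + 1)).card * (n * n.choose 2) := by
  set r : Finset (Fin d → ℕ) → Finset (Fin d → ℕ) → Prop := fun Q Q' =>
    ∃ c x, x ∈ Q ∧ 2 ≤ ∑ t, x t ∧ e c ∉ Q ∧ Q' = insert (e c) (Q.erase x) with hrdef
  refine Finset.card_mul_le_card_mul r ?_ ?_
  · -- each lower set with k active coordinates relates to at least d - k sets
    intro Q hQA
    obtain ⟨hQLS, hac⟩ := Finset.mem_filter.1 hQA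
    obtain ⟨hQl, hQc⟩ := mem_LS.1 hQLS
    obtain ⟨x, hxQ, hx2, hmax⟩ := exists_big_max hQl hQc hac hk
    have hne : Q.Nonempty := ⟨x, hxQ⟩
    have hcard : ((actv Q)ᶜ : Finset (Fin d)).card = d - k := by
      rw [Finset.card_compl, hac, Fintype.card_fin]
    rw [← hcard]
    refine Finset.card_le_card_of_injOn (fun c => insert (e c) (Q.erase x)) ?_ ?_
    · intro c hc
      have hcact : c ∉ actv Q := Finset.mem_compl.1 hc
      have hec : e c ∉ Q := e_not_mem hcact
      refine (Finset.mem_bipartiteAbove r).2 ⟨?_, c, x, hxQ, hx2, hec, rfl⟩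
      refine Finset.mem_filter.2 ⟨mem_LS.2 ⟨construct_lower hQl hne hxQ hx2 hmax hec,
        construct_card hQc (by omega) hxQ hec⟩, ?_⟩
      rw [construct_actv hQl hxQ hx2 hec, Finset.card_insert_of_notMem hcact, hac]
    · intro c1 h1 c2 h2 heq
      have h' : insert (e c1) (Q.erase x) = insert (e c2) (Q.erase x) := heq
      have hmm : e c1 ∈ insert (e c2) (Q.erase x) := by
        rw [← h']; exact Finset.mem_insert_self _ _
      rcases Finset.mem_insert.1 hmm with hh | hh
      · exact e_inj hh
      · exact absurd (Finset.mem_erase.1 hh).2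
          (e_not_mem (Finset.mem_compl.1 (by exact_mod_cast h1)))
  · -- each lower set with k+1 active coordinates has few preimages
    intro Q' hQ'A
    obtain ⟨hQ'LS, hac'⟩ := Finset.mem_filter.1 hQ'A
    obtain ⟨hQ'l, hQ'c⟩ := mem_LS.1 hQ'LS
    have hinjcard : ((A d n k).bipartiteBelow r Q').card
        ≤ ((actv Q') ×ˢ (Q'.powersetCard 2)).card := by
      refine Finset.card_le_card_of_injOn (fun Q => if h : r Q Q' then
        (h.choose, {(pairOf h.choose_spec.choose).1, (pairOf h.choose_spec.choose).2})
        else (⟨0, hd⟩, ∅)) ?_ ?_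
      · intro Q hQmem
        obtain ⟨hQA, hrel⟩ := (Finset.mem_bipartiteBelow r).1 hQmem
        obtain ⟨hQl, hQc⟩ := mem_LS.1 (Finset.mem_filter.1 hQA).1
        simp only [dif_pos hrel]
        obtain ⟨hxQ, hx2, hec, hQ'eq⟩ := hrel.choose_spec.choose_spec
        exact code_mem hQl hxQ hx2 hQ'eq
      · intro Q1 hQ1 Q2 hQ2 heq
        have hrel1 : r Q1 Q' := ((Finset.mem_bipartiteBelow r).1 (by exact_mod_cast hQ1)).2
        have hrel2 : r Q2 Q' := ((Finset.mem_bipartiteBelow r).1 (by exact_mod_cast hQ2)).2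
        simp only [dif_pos hrel1, dif_pos hrel2] at heq
        obtain ⟨hxQ1, hx21, hec1, hQ'eq1⟩ := hrel1.choose_spec.choose_spec
        obtain ⟨hxQ2, hx22, hec2, hQ'eq2⟩ := hrel2.choose_spec.choose_spec
        rw [Prod.mk.injEq] at heq
        obtain ⟨hceq, hpeq⟩ := heq
        have hxeq : hrel1.choose_spec.choose = hrel2.choose_spec.choose := by
          have hrec := congrArg recovF hpeq
          rwa [(pairOf_spec hx21).2.2.2.2.2, (pairOf_spec hx22).2.2.2.2.2] at hrec
        rw [reconstruct hxQ1 hec1 hQ'eq1, reconstruct hxQ2 hec2 hQ'eq2, hxeq, hceq]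
    have hcardP : ((actv Q') ×ˢ (Q'.powersetCard 2)).card = (k + 1) * n.choose 2 := by
      rw [Finset.card_product, hac', Finset.card_powersetCard, hQ'c]
    have hfin : (k + 1) * n.choose 2 ≤ n * n.choose 2 :=
      Nat.mul_le_mul_right _ (by omega)
    omega

lemma two_mul_choose_two (n : ℕ) : 2 * n.choose 2 = n * (n - 1) := by
  induction n with
  | zero => rfl
  | succ m ih =>
    rw [Nat.choose_succ_succ, Nat.mul_add, ih, Nat.choose_one_right]
    cases m with
    | zero => rfl
    | succ s =>
      simp only [Nat.succ_sub_one]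
      ring

lemma Ltop_le {n : ℕ} (hd : 1 ≤ d) (hn : 1 ≤ n) :
    (A d n (n - 1)).card ≤ (d + n - 2).choose (n - 1) := by
  rcases eq_or_lt_of_le hn with h1 | h2
  · rw [← h1]
    simp only [Nat.sub_self, Nat.choose_zero_right]
    have hsubs : (A d 1 0).card ≤ (LS d 1).card :=
      Finset.card_le_card (Finset.filter_subset _ _)
    have hone : (LS d 1).card ≤ 1 := by
      refine Finset.card_le_one.2 fun Q1 hq1 Q2 hq2 => ?_
      have key : ∀ Q ∈ LS d 1, Q = {(0 : Fin d → ℕ)} := by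
        intro Q hQ
        obtain ⟨hQl, hQc⟩ := mem_LS.1 hQ
        obtain ⟨a, ha⟩ := Finset.card_eq_one.1 hQc
        have h0 : (0 : Fin d → ℕ) ∈ Q := zero_mem hQl (Finset.card_pos.1 (by omega))
        rw [ha] at h0 ⊢
        rw [Finset.mem_singleton.1 h0]
      rw [key Q1 hq1, key Q2 hq2]
    omega
  · exact (A_top_le hn).trans (Nat.choose_le_choose _ (by omega : d ≤ d + n - 2))

lemma real_step {n k : ℕ} (hd : 1 ≤ d) (hn : 1 ≤ n) (hbig : (n : ℝ) ^ 3 / 2 < d)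
    (hk : k + 2 ≤ n) :
    ((A d n k).card : ℝ) ≤ ((n : ℝ) ^ 3 / (2 * d)) * (A d n (k + 1)).card := by
  have hn1 : (1 : ℝ) ≤ n := by exact_mod_cast hn
  have hd0 : (0 : ℝ) < d := by exact_mod_cast hd
  have hk' : (k : ℝ) ≤ (n : ℝ) - 2 := by
    have hkn : k ≤ n - 2 := by omega
    have := (Nat.cast_le (α := ℝ)).2 hkn
    rw [Nat.cast_sub (by omega)] at this
    exact_mod_cast this
  have hkd : k < d := by
    have h2 : (k : ℝ) < d := by
      nlinarith [mul_nonneg (sub_nonneg.2 hn1) (sq_nonneg (n : ℝ)), sq_nonneg ((n : ℝ) - 2)]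
    exact_mod_cast h2
  have hnat := step (d := d) (n := n) (k := k) hd hk
  have hnat2 : 2 * ((A d n k).card * (d - k))
      ≤ (A d n (k + 1)).card * (n * (n * (n - 1))) := by
    calc 2 * ((A d n k).card * (d - k))
        ≤ 2 * ((A d n (k + 1)).card * (n * n.choose 2)) := by omega
      _ = (A d n (k + 1)).card * (n * (2 * n.choose 2)) := by ring
      _ = (A d n (k + 1)).card * (n * (n * (n - 1))) := by rw [two_mul_choose_two]
  have hcast : 2 * (((A d n k).card : ℝ) * ((d : ℝ) - k))
      ≤ ((A d n (k + 1)).card : ℝ) * (n * (n * ((n : ℝ) - 1))) := by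
    have hc := (Nat.cast_le (α := ℝ)).2 hnat2
    push_cast [Nat.cast_sub hkd.le, Nat.cast_sub hn] at hc
    nlinarith [hc]
  have hdk0 : (0 : ℝ) < (d : ℝ) - (k : ℝ) := by
    have : (k : ℝ) < d := by exact_mod_cast hkd
    linarith
  have hnk : (n : ℝ) * k ≤ d := by
    nlinarith [mul_le_mul_of_nonneg_left hk' (by linarith : (0 : ℝ) ≤ (n : ℝ)),
      mul_nonneg (by linarith : (0 : ℝ) ≤ (n : ℝ)) (sq_nonneg ((n : ℝ) - 1))]
  rw [div_mul_eq_mul_div, le_div_iff₀ (by linarith : (0 : ℝ) < 2 * (d : ℝ))]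
  have hL1 : (0 : ℝ) ≤ ((A d n (k + 1)).card : ℝ) := Nat.cast_nonneg _
  have hfinal : ((A d n k).card : ℝ) * (2 * d) * ((d : ℝ) - k)
      ≤ (n : ℝ) ^ 3 * ((A d n (k + 1)).card : ℝ) * ((d : ℝ) - k) := by
    have hstep2 := mul_le_mul_of_nonneg_right hcast hd0.le
    have hpoly : ((A d n (k + 1)).card : ℝ) * (n * (n * ((n : ℝ) - 1))) * d
        ≤ (n : ℝ) ^ 3 * ((A d n (k + 1)).card : ℝ) * ((d : ℝ) - k) := by
      nlinarith [mul_nonneg (mul_nonneg hL1 (mul_self_nonneg (n : ℝ)))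
        (sub_nonneg.2 hnk)]
    nlinarith [hstep2, hpoly]
  have := le_of_mul_le_mul_right (by linarith [hfinal] :
    ((A d n k).card : ℝ) * (2 * d) * ((d : ℝ) - k)
      ≤ ((n : ℝ) ^ 3 * ((A d n (k + 1)).card : ℝ)) * ((d : ℝ) - k)) hdk0
  linarith

end LowerAux

theorem stmt_10 (d n : ℕ) (hd : 1 ≤ d) (hn : 1 ≤ n) (h : (n : ℝ) ^ 3 / 2 < d) :
    (numLowerSets d n : ℝ) <
      ((d + n - 2).choose (d - 1) : ℝ) / (1 - (n : ℝ) ^ 3 / (2 * d)) := by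
  classical
  open LowerAux in
  have hn1 : (1 : ℝ) ≤ n := by exact_mod_cast hn
  have hd0 : (0 : ℝ) < d := by exact_mod_cast hd
  set rr : ℝ := (n : ℝ) ^ 3 / (2 * d) with hrrdef
  have hrr0 : 0 < rr := div_pos (pow_pos (by linarith : (0:ℝ) < (n:ℝ)) 3) (by linarith)
  have hrr1 : rr < 1 := by
    rw [hrrdef, div_lt_one (by linarith)]
    linarith
  have h1rr : 0 < 1 - rr := by linarith
  -- the chain of inequalities
  have hchain : ∀ j, j ≤ n - 1 →
      ((A d n (n - 1 - j)).card : ℝ) ≤ rr ^ j * ((A d n (n - 1)).card : ℝ) := by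
    intro j
    induction j with
    | zero => intro _; simp
    | succ m ih =>
      intro hm
      have ihm := ih (by omega)
      have hk2 : (n - 1 - (m + 1)) + 2 ≤ n := by omega
      have hstepk := real_step (d := d) (n := n) (k := n - 1 - (m + 1)) hd hn h hk2
      have hkk : (n - 1 - (m + 1)) + 1 = n - 1 - m := by omega
      rw [hkk] at hstepk
      calc ((A d n (n - 1 - (m + 1))).card : ℝ)
          ≤ rr * ((A d n (n - 1 - m)).card : ℝ) := hstepk
        _ ≤ rr * (rr ^ m * ((A d n (n - 1)).card : ℝ)) :=
            mul_le_mul_of_nonneg_left ihm hrr0.le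
        _ = rr ^ (m + 1) * ((A d n (n - 1)).card : ℝ) := by ring
  -- sum bound
  have hsum : (numLowerSets d n : ℝ)
      ≤ ((A d n (n - 1)).card : ℝ) * ∑ j ∈ Finset.range n, rr ^ j := by
    rw [numLowerSets_eq, card_LS_eq_sum hn, Nat.cast_sum]
    rw [← Finset.sum_range_reflect (fun k => ((A d n k).card : ℝ)) n]
    rw [Finset.mul_sum]
    refine Finset.sum_le_sum fun j hj => ?_
    have hj' : j ≤ n - 1 := by
      have := Finset.mem_range.1 hj; omega
    calc ((A d n (n - 1 - j)).card : ℝ)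
        ≤ rr ^ j * ((A d n (n - 1)).card : ℝ) := hchain j hj'
      _ = ((A d n (n - 1)).card : ℝ) * rr ^ j := by ring
  -- rewrite the binomial coefficient
  have hCC : (d + n - 2).choose (d - 1) = (d + n - 2).choose (n - 1) := by
    have h1 : d - 1 ≤ d + n - 2 := by omega
    have h2 := Nat.choose_symm h1
    have h3 : d + n - 2 - (d - 1) = n - 1 := by omega
    rw [h3] at h2
    exact h2.symm
  rw [hCC]
  have hC1 : (1 : ℝ) ≤ ((d + n - 2).choose (n - 1) : ℝ) := by
    have := Nat.choose_pos (show n - 1 ≤ d + n - 2 by omega)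
    exact_mod_cast this
  have hLtop : ((A d n (n - 1)).card : ℝ) ≤ ((d + n - 2).choose (n - 1) : ℝ) := by
    exact_mod_cast Ltop_le hd hn
  have hgeom : (∑ j ∈ Finset.range n, rr ^ j) * (1 - rr) = 1 - rr ^ n := by
    have hg := geom_sum_mul rr n
    linear_combination -hg
  rw [lt_div_iff₀ h1rr]
  have hLnn : (0 : ℝ) ≤ ((A d n (n - 1)).card : ℝ) := Nat.cast_nonneg _
  have hrrn : 0 < rr ^ n := pow_pos hrr0 n
  calc (numLowerSets d n : ℝ) * (1 - rr)
      ≤ (((A d n (n - 1)).card : ℝ) * ∑ j ∈ Finset.range n, rr ^ j) * (1 - rr) :=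
        mul_le_mul_of_nonneg_right hsum h1rr.le
    _ = ((A d n (n - 1)).card : ℝ) * ((∑ j ∈ Finset.range n, rr ^ j) * (1 - rr)) := by ring
    _ = ((A d n (n - 1)).card : ℝ) * (1 - rr ^ n) := by rw [hgeom]
    _ < ((d + n - 2).choose (n - 1) : ℝ) := by
        rcases eq_or_lt_of_le hLnn with heq | hpos
        · rw [← heq]
          linarith
        · nlinarith [mul_pos hpos hrrn]
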